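/- arXiv:2504.01124 — 2 statements merged into one kernel-verified Lean document; each statement's English description precedes it below -/
import Mathlib

section
/- A distributive nearlattice A is Stone if and only if every element of R(A) = {a⊤ : a ∈ A} has a complement in the lattice Fi(A) of filters of A. -/
/-- A distributive nearlattice, presented (following Araújo–Kinyon) as a
join-semilattice with top together with its canonical ternary operation
`m x y z = (x ⊔ z) ⊓_z (y ⊔ z)` (the meet taken in the principal filter `[z)`),
satisfying the Araújo–Kinyon identities.  This is equivalent to: every
principal filter is a bounded distributive lattice. -/
class DNearlattice (A : Type*) extends SemilatticeSup A, OrderTop A where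
  m : A → A → A → A
  sup_eq_m : ∀ x y : A, x ⊔ y = m x x y
  m_ax2 : ∀ x y : A, m x y x = x
  m_ax3 : ∀ u w x y z : A,
    m (m x y z) (m y (m u x z) z) w = m w w (m y (m x u z) z)
  m_ax4 : ∀ w x y z : A,
    m x (m y y z) w = m (m x y w) (m x y w) (m x z w)

variable {A : Type*} [DNearlattice A]

/-- The annihilator `a⊤ = {x | x ⊔ a = ⊤}`. -/
def ann (a : A) : Set A := {x : A | x ⊔ a = ⊤}

/-- The annihilator of a set (filter): `F⊤ = {x | ∀ f ∈ F, x ⊔ f = ⊤}`. -/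
def annF (F : Set A) : Set A := {x : A | ∀ f ∈ F, x ⊔ f = ⊤}

/-- The double annihilator `a⊤⊤`. -/
def dann (a : A) : Set A := annF (ann a)

/-- A filter: contains `⊤`, is upward closed, and is closed under existing
binary meets (greatest lower bounds). -/
def IsFil (F : Set A) : Prop :=
  ⊤ ∈ F ∧ (∀ a b : A, a ≤ b → a ∈ F → b ∈ F) ∧
    (∀ a b c : A, a ∈ F → b ∈ F → IsGLB {a, b} c → c ∈ F)

/-- The filter generated by a set: the intersection of all filters containing it. -/
def filGen (X : Set A) : Set A := ⋂₀ {F : Set A | IsFil F ∧ X ⊆ F}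

/-- The join of two filters in the lattice of filters. -/
def filJoin (F G : Set A) : Set A := filGen (F ∪ G)

/-- An ideal: downward closed and closed under joins. -/
def IsIdl (I : Set A) : Prop :=
  (∀ a b : A, a ≤ b → b ∈ I → a ∈ I) ∧ (∀ a b : A, a ∈ I → b ∈ I → a ⊔ b ∈ I)

/-- A prime ideal: a nonempty proper ideal such that whenever an existing
meet `a ∧ b` lies in it, `a` or `b` lies in it. -/
def IsPrimeIdl (P : Set A) : Prop :=
  IsIdl P ∧ P.Nonempty ∧ P ≠ Set.univ ∧
    (∀ a b c : A, IsGLB {a, b} c → c ∈ P → a ∈ P ∨ b ∈ P)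

/-- A maximal ideal: a nonempty proper ideal maximal among proper ideals. -/
def IsMaxIdl (I : Set A) : Prop :=
  IsIdl I ∧ I.Nonempty ∧ I ≠ Set.univ ∧
    (∀ J : Set A, IsIdl J → I ⊆ J → J = I ∨ J = Set.univ)

/-- A prime filter: `a ⊔ b ∈ F` implies `a ∈ F` or `b ∈ F`. -/
def IsPrimeFil (F : Set A) : Prop :=
  IsFil F ∧ ∀ a b : A, a ⊔ b ∈ F → a ∈ F ∨ b ∈ F

/-- An α-filter: a filter containing `a⊤⊤` for each of its elements `a`. -/
def IsAlphaFil (F : Set A) : Prop := IsFil F ∧ ∀ a ∈ F, dann a ⊆ F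

/-- An α-ideal: an ideal `I` such that `I ∩ a⊤⊤ ≠ ∅` implies `a ∈ I`. -/
def IsAlphaIdl (I : Set A) : Prop :=
  IsIdl I ∧ ∀ a : A, (I ∩ dann a).Nonempty → a ∈ I

/-- Quasicomplemented: every `a⊤⊤` is of the form `b⊤`. -/
def Quasicomplemented (B : Type*) [DNearlattice B] : Prop :=
  ∀ a : B, ∃ b : B, dann a = ann b

/-- Normal: `(a ⊔ b)⊤ = a⊤ ⋎ b⊤` for all `a, b`. -/
def NormalNL (B : Type*) [DNearlattice B] : Prop :=
  ∀ a b : B, ann (a ⊔ b) = filJoin (ann a) (ann b)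

/-- Stone: `a⊤ ⋎ a⊤⊤ = A` for all `a`. -/
def StoneNL (B : Type*) [DNearlattice B] : Prop :=
  ∀ a : B, filJoin (ann a) (dann a) = Set.univ


section Aux

open DNearlattice (m)

private lemma dist2 (x a b w : A) : m x (a ⊔ b) w = m x a w ⊔ m x b w := by
  rw [DNearlattice.sup_eq_m a b, DNearlattice.m_ax4, ← DNearlattice.sup_eq_m]

private lemma lem5 (x y z u : A) : m y (m x u z) z ≤ m x y z := by
  have h := DNearlattice.m_ax3 u (m x y z) x y z
  rw [DNearlattice.m_ax2, ← DNearlattice.sup_eq_m] at h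
  exact sup_eq_left.mp h.symm

private lemma mcomm (x y z : A) : m x y z = m y x z := by
  have key : ∀ a b : A, m a b z ≤ m b a z := by
    intro a b
    calc m a b z ≤ m a b z ⊔ m a z z := le_sup_left
      _ = m a (b ⊔ z) z := (dist2 a b z z).symm
      _ = m a (m b b z) z := by rw [← DNearlattice.sup_eq_m]
      _ ≤ m b a z := lem5 b a z b
  exact le_antisymm (key x y) (key y x)

private lemma mono2 (x z : A) {a b : A} (h : a ≤ b) : m x a z ≤ m x b z := by
  have : m x b z = m x a z ⊔ m x b z := by
    rw [← dist2, sup_eq_right.mpr h]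
  rw [this]; exact le_sup_left

private lemma le3 (x y z : A) : z ≤ m x y z := by
  have hz : m x z z = z := by rw [mcomm, DNearlattice.m_ax2]
  calc z = m x z z := hz.symm
    _ ≤ m x (z ⊔ y) z := mono2 x z le_sup_left
    _ = m x (y ⊔ z) z := by rw [sup_comm]
    _ = m x (m y y z) z := by rw [← DNearlattice.sup_eq_m]
    _ ≤ m y x z := lem5 y x z y
    _ = m x y z := (mcomm x y z).symm

private lemma x_le_T (x z : A) : x ≤ m x ⊤ z := by
  calc x ≤ x ⊔ z := le_sup_left
    _ = m x x z := DNearlattice.sup_eq_m x z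
    _ ≤ m x ⊤ z := mono2 x z le_top

private lemma keyF (x y z : A) : m y (m x ⊤ z) z = m x y z := by
  refine le_antisymm (lem5 x y z ⊤) ?_
  calc m x y z = m y x z := mcomm x y z
    _ ≤ m y (m x ⊤ z) z := mono2 y z (x_le_T x z)

private lemma ub1 (x y z : A) : m x y z ≤ x ⊔ z := by
  have hT : m x ⊤ z ≤ x ⊔ z := by
    have h1 : m (m x ⊤ z) (m x ⊤ z) z = m x (m x ⊤ z) z := keyF x (m x ⊤ z) z
    have h2 : m x (m x ⊤ z) z = m x x z := keyF x x z
    have h3 : m x ⊤ z ⊔ z = x ⊔ z := by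
      rw [DNearlattice.sup_eq_m (m x ⊤ z) z, h1, h2, ← DNearlattice.sup_eq_m]
    calc m x ⊤ z ≤ m x ⊤ z ⊔ z := le_sup_left
      _ = x ⊔ z := h3
  exact (mono2 x z le_top).trans hT

private lemma ub2 (x y z : A) : m x y z ≤ y ⊔ z := by
  rw [mcomm]; exact ub1 y x z

private lemma dann_isFil (a : A) : IsFil (dann a) := by
  refine ⟨?_, ?_, ?_⟩
  · intro f _; exact top_sup_eq f
  · intro p q hpq hp f hf
    have := hp f hf
    exact top_le_iff.mp (this ▸ sup_le_sup_right hpq f)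
  · intro x y c hx hy hglb f hf
    have hcx : c ≤ x := hglb.1 (by simp)
    have hcy : c ≤ y := hglb.1 (by simp [Set.mem_insert_iff])
    have hmc : m x y c = c := by
      refine le_antisymm ?_ (le3 x y c)
      refine hglb.2 ?_
      intro t ht
      simp only [Set.mem_insert_iff, Set.mem_singleton_iff] at ht
      rcases ht with h | h
      · rw [h]; exact (ub1 x y c).trans_eq (sup_eq_left.mpr hcx)
      · rw [h]; exact (ub2 x y c).trans_eq (sup_eq_left.mpr hcy)
    set g := f ⊔ c with hg
    have hcg : c ≤ g := le_sup_right
    have hxg : x ⊔ g = ⊤ := by rw [hg, ← sup_assoc, hx f hf, top_sup_eq]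
    have hyg : y ⊔ g = ⊤ := by rw [hg, ← sup_assoc, hy f hf, top_sup_eq]
    have hD1 : m (x ⊔ g) (y ⊔ g) c = ⊤ := by
      rw [hxg, hyg, ← DNearlattice.sup_eq_m, top_sup_eq]
    have hD2 : m (x ⊔ g) (y ⊔ g) c ≤ g := by
      have e1 : m (x ⊔ g) (y ⊔ g) c = m (y ⊔ g) x c ⊔ m (y ⊔ g) g c := by
        rw [mcomm, dist2]
      have e2 : m (y ⊔ g) x c = c ⊔ m x g c := by
        rw [mcomm, dist2, hmc]
      have e3 : m (y ⊔ g) g c ≤ g := (ub2 (y ⊔ g) g c).trans_eq (sup_eq_left.mpr hcg)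
      have e4 : m x g c ≤ g := (ub2 x g c).trans_eq (sup_eq_left.mpr hcg)
      rw [e1, e2]
      exact sup_le (sup_le hcg e4) e3
    have hgtop : g = ⊤ := top_le_iff.mp (hD1 ▸ hD2)
    have : f ⊔ c = ⊤ := hgtop
    rwa [sup_comm] at this

private lemma filGen_mono {X Y : Set A} (h : X ⊆ Y) : filGen X ⊆ filGen Y := by
  intro t ht F hF
  exact ht F ⟨hF.1, h.trans hF.2⟩

end Aux

/-- `A` is Stone iff every element of `R(A)` has a complement in the
lattice of filters of `A`. -/
theorem stmt16 :
    StoneNL A ↔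
      ∀ a : A, ∃ H : Set A, IsFil H ∧ ann a ∩ H = {(⊤ : A)} ∧
        filJoin (ann a) H = Set.univ := by
  constructor
  · intro hs a
    refine ⟨dann a, dann_isFil a, ?_, hs a⟩
    ext t
    constructor
    · rintro ⟨hta, htd⟩
      have := htd t hta
      simpa using this
    · rintro rfl
      exact ⟨top_sup_eq a, fun f _ => top_sup_eq f⟩
  · intro h a
    obtain ⟨H, hFil, hInt, hJoin⟩ := h a
    have hsub : H ⊆ dann a := by
      intro t ht f hf
      have h1 : t ⊔ f ∈ H := hFil.2.1 t (t ⊔ f) le_sup_left ht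
      have h2 : t ⊔ f ∈ ann a := by
        show (t ⊔ f) ⊔ a = ⊤
        rw [sup_assoc, hf, sup_top_eq]
      have : t ⊔ f ∈ ann a ∩ H := ⟨h2, h1⟩
      rw [hInt] at this
      simpa using this
    refine Set.eq_univ_of_univ_subset ?_
    rw [← hJoin]
    exact filGen_mono (Set.union_subset_union_right _ hsub)
end

section
/- A distributive nearlattice A is normal and quasicomplemented if and only if R(A) = {a⊤ : a ∈ A} is a Boolean algebra (every element of R(A) has a complement in R(A)). -/
variable {A : Type*} [DNearlattice A]

local notation "μ" => DNearlattice.m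

open DNearlattice in
lemma m_self (x y : A) : μ x x y = x ⊔ y := (sup_eq_m x y).symm

open DNearlattice in
lemma m_aba (x y : A) : μ x y x = x := m_ax2 x y

open DNearlattice in
lemma m_xzz (x z : A) : μ x z z = z := by
  -- First: μ (μ x z z) z w = w ⊔ z  (ax3 with y := z, u := z)
  have E21 : ∀ x z w : A, μ (μ x z z) z w = w ⊔ z := by
    intro x z w
    have h := m_ax3 z w x z z
    rw [m_ax2 z (μ z x z), m_ax2 z (μ x z z)] at h
    rw [h, ← sup_eq_m]
  have hle : z ≤ μ x z z := by
    have h := E21 x z (μ x z z)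
    rw [m_ax2] at h
    exact sup_eq_left.mp h.symm
  -- z = z ⊔ μ x z z  (ax3 with x := z, u := z, w := z)
  have h := m_ax3 z z z x z
  rw [m_ax2 z x, ← sup_eq_m z z, sup_idem, ← sup_eq_m z (μ x z z), m_ax2 z (μ x z z)] at h
  exact le_antisymm (sup_eq_left.mp h.symm) hle

open DNearlattice in
/-- E20: if `a ≤ b` then `μ b a w = a ⊔ w`. -/
lemma m_absorb {a b : A} (w : A) (h : a ≤ b) : μ b a w = a ⊔ w := by
  have h3 := m_ax3 a w b b a
  rw [← sup_eq_m b a, sup_eq_left.mpr h, m_ax2 a b, m_xzz b a, m_xzz b a] at h3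
  rw [h3, ← sup_eq_m, sup_comm]

open DNearlattice in
/-- E1: `μ y (μ x u z) z ≤ μ x y z`. -/
lemma m_le (u x y z : A) : μ y (μ x u z) z ≤ μ x y z := by
  have h := m_ax3 u (μ x y z) x y z
  rw [m_ax2 (μ x y z) (μ y (μ u x z) z), ← sup_eq_m] at h
  exact sup_eq_left.mp h.symm

open DNearlattice in
lemma m_sup2 (x y z w : A) : μ x (y ⊔ z) w = μ x y w ⊔ μ x z w := by
  rw [sup_eq_m y z, m_ax4, ← sup_eq_m]

open DNearlattice in
lemma m_comm (x y z : A) : μ x y z = μ y x z := by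
  have key : ∀ x y z : A, μ y x z ⊔ z ≤ μ x y z := by
    intro x y z
    have h := m_le x x y z
    rwa [← sup_eq_m x z, m_sup2, m_xzz] at h
  exact le_antisymm (le_trans le_sup_left (key y x z)) (le_trans le_sup_left (key x y z))

open DNearlattice in
lemma le_m (x y z : A) : z ≤ μ x y z := by
  have h := m_le x x y z
  rw [← sup_eq_m x z, m_sup2, m_xzz] at h
  exact le_trans le_sup_right h

open DNearlattice in
lemma m_mono2 {y y' : A} (x z : A) (h : y ≤ y') : μ x y z ≤ μ x y' z := by
  have : μ x y' z = μ x y z ⊔ μ x y' z := by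
    rw [← m_sup2, sup_eq_right.mpr h]
  exact le_sup_left.trans_eq this.symm

open DNearlattice in
lemma m_mono1 {x x' : A} (y z : A) (h : x ≤ x') : μ x y z ≤ μ x' y z := by
  rw [m_comm x y z, m_comm x' y z]; exact m_mono2 y z h

open DNearlattice in
/-- G2: `μ x y z ≤ x ⊔ z`. -/
lemma m_le_sup (x y z : A) : μ x y z ≤ x ⊔ z := by
  calc μ x y z = μ y x z := m_comm x y z
    _ ≤ μ y (x ⊔ z) z := m_mono2 y z le_sup_left
    _ ≤ μ ((x ⊔ z) ⊔ y) (x ⊔ z) z := m_mono1 (x ⊔ z) z le_sup_right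
    _ = (x ⊔ z) ⊔ z := m_absorb z le_sup_left
    _ = x ⊔ z := by rw [sup_assoc, sup_idem]

open DNearlattice in
lemma m_sup_right (x y z : A) : μ x (y ⊔ z) z = μ x y z := by
  rw [m_sup2, m_xzz, sup_eq_left.mpr (le_m x y z)]

open DNearlattice in
/-- G3: greatest lower bound property. -/
lemma le_m_of {x y z w : A} (h1 : w ≤ x ⊔ z) (h2 : w ≤ y ⊔ z) : w ≤ μ x y z := by
  have e1 : μ w (y ⊔ z) z = w ⊔ z := by
    rw [m_comm]; exact m_absorb z h2
  have e2 : μ (x ⊔ z) (y ⊔ z) z = μ x y z := by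
    rw [m_sup_right, m_comm, m_comm x y z, m_sup_right]
  calc w ≤ w ⊔ z := le_sup_left
    _ = μ w (y ⊔ z) z := e1.symm
    _ ≤ μ (x ⊔ z) (y ⊔ z) z := m_mono1 _ _ h1
    _ = μ x y z := e2

open DNearlattice in
lemma m_isGLB (x y z : A) : IsGLB {x ⊔ z, y ⊔ z} (μ x y z) := by
  constructor
  · rintro c (rfl | hc)
    · exact m_le_sup x y z
    · rw [Set.mem_singleton_iff] at hc
      subst hc
      rw [m_comm]; exact m_le_sup y x z
  · intro w hw
    exact le_m_of (hw (Set.mem_insert _ _)) (hw (Set.mem_insert_of_mem _ rfl))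

open DNearlattice in
lemma m_eq_of_glb {u v c : A} (h : IsGLB {u, v} c) : μ u v c = c := by
  have hcu : c ≤ u := h.1 (Set.mem_insert _ _)
  have hcv : c ≤ v := h.1 (Set.mem_insert_of_mem _ rfl)
  have hg := m_isGLB u v c
  rw [sup_eq_left.mpr hcu, sup_eq_left.mpr hcv] at hg
  exact hg.unique h

open DNearlattice in
/-- Distributivity: for `z ≤ w`, `μ x y w = μ x y z ⊔ w`. -/
lemma m_dist (x y : A) {z w : A} (h : z ≤ w) : μ x y w = μ x y z ⊔ w := by
  have g1 : IsGLB {x ⊔ w, y ⊔ w} (μ x y w) := m_isGLB x y w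
  have g2 : IsGLB {x ⊔ w, y ⊔ w} (μ (x ⊔ w) (y ⊔ w) z) := by
    have hg := m_isGLB (x ⊔ w) (y ⊔ w) z
    rwa [sup_eq_left.mpr (h.trans le_sup_right), sup_eq_left.mpr (h.trans le_sup_right)] at hg
  have e : μ x y w = μ (x ⊔ w) (y ⊔ w) z := g1.unique g2
  have e2 : μ (x ⊔ w) w z = w := by
    rw [m_absorb z le_sup_right, sup_eq_left.mpr h]
  have e3 : μ y w z ≤ w := by
    have := m_le_sup w y z
    rw [m_comm w y z] at this
    exact this.trans (sup_le le_rfl h)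
  rw [e, m_sup2, e2, m_comm _ y z, m_sup2, m_comm y x z, sup_assoc,
    sup_eq_right.mpr e3]

open DNearlattice in
lemma isFil_ann (a : A) : IsFil (ann a) := by
  refine ⟨by simp [ann], fun x y hxy hx => ?_, fun u v c hu hv hglb => ?_⟩
  · have : (⊤ : A) ≤ y ⊔ a := by
      rw [← hx]; exact sup_le_sup_right hxy a
    exact le_antisymm le_top this
  · have hcu : c ≤ u := hglb.1 (Set.mem_insert _ _)
    have hcv : c ≤ v := hglb.1 (Set.mem_insert_of_mem _ rfl)
    have hc : μ u v c = c := m_eq_of_glb hglb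
    have h1 : μ u v (c ⊔ a) = μ u v c ⊔ (c ⊔ a) := m_dist u v le_sup_left
    rw [hc, ← sup_assoc, sup_idem] at h1
    have hg := m_isGLB u v (c ⊔ a)
    have eu : u ⊔ (c ⊔ a) = ⊤ := by rw [← sup_assoc, sup_eq_left.mpr hcu]; exact hu
    have ev : v ⊔ (c ⊔ a) = ⊤ := by rw [← sup_assoc, sup_eq_left.mpr hcv]; exact hv
    rw [eu, ev] at hg
    have htop : (⊤ : A) ≤ μ u v (c ⊔ a) := hg.2 (by rintro t (rfl | ht) <;> simp_all)
    show c ⊔ a = ⊤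
    rw [← h1]
    exact le_antisymm le_top htop

lemma filGen_subset {X F : Set A} (hF : IsFil F) (hXF : X ⊆ F) : filGen X ⊆ F :=
  fun _ hx => hx F ⟨hF, hXF⟩

lemma subset_filGen (X : Set A) : X ⊆ filGen X :=
  fun _ hx _ hF => hF.2 hx

open DNearlattice in
lemma mem_filJoin {F G : Set A} (hF : IsFil F) (hG : IsFil G) {x : A} :
    x ∈ filJoin F G ↔ ∃ f ∈ F, ∃ g ∈ G, μ f g x = x := by
  constructor
  · intro hx
    set S : Set A := {x : A | ∃ f ∈ F, ∃ g ∈ G, μ f g x = x} with hS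
    have hSF : IsFil S := by
      refine ⟨⟨⊤, hF.1, ⊤, hG.1, m_aba ⊤ ⊤⟩, ?_, ?_⟩
      · rintro p q hpq ⟨f, hf, g, hg, hm⟩
        refine ⟨f, hf, g, hg, ?_⟩
        rw [m_dist f g hpq, hm, sup_eq_right.mpr hpq]
      · rintro p q c ⟨f, hf, g, hg, hm⟩ ⟨f', hf', g', hg', hm'⟩ hglb
        have hcp : c ≤ p := hglb.1 (Set.mem_insert _ _)
        have hcq : c ≤ q := hglb.1 (Set.mem_insert_of_mem _ rfl)
        have hf1 : μ f f' c ∈ F :=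
          hF.2.2 (f ⊔ c) (f' ⊔ c) _ (hF.2.1 f _ le_sup_left hf)
            (hF.2.1 f' _ le_sup_left hf') (m_isGLB f f' c)
        have hg1 : μ g g' c ∈ G :=
          hG.2.2 (g ⊔ c) (g' ⊔ c) _ (hG.2.1 g _ le_sup_left hg)
            (hG.2.1 g' _ le_sup_left hg') (m_isGLB g g' c)
        refine ⟨μ f f' c, hf1, μ g g' c, hg1, m_eq_of_glb ?_⟩
        constructor
        · rintro t (rfl | ht)
          · exact le_m f f' c
          · rw [Set.mem_singleton_iff] at ht; subst ht; exact le_m g g' c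
        · intro t ht
          have htf : t ≤ μ f f' c := ht (Set.mem_insert _ _)
          have htg : t ≤ μ g g' c := ht (Set.mem_insert_of_mem _ rfl)
          have htp : t ≤ p := by
            rw [← hm]
            refine le_m_of (htf.trans ?_) (htg.trans ?_)
            · exact (m_le_sup f f' c).trans (sup_le le_sup_left (hcp.trans le_sup_right))
            · exact (m_le_sup g g' c).trans (sup_le le_sup_left (hcp.trans le_sup_right))
          have htq : t ≤ q := by
            rw [← hm']
            refine le_m_of (htf.trans ?_) (htg.trans ?_)
            · rw [m_comm]
              exact (m_le_sup f' f c).trans (sup_le le_sup_left (hcq.trans le_sup_right))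
            · rw [m_comm]
              exact (m_le_sup g' g c).trans (sup_le le_sup_left (hcq.trans le_sup_right))
          exact hglb.2 (by rintro s (rfl | hs); · exact htp
                           · rw [Set.mem_singleton_iff] at hs; subst hs; exact htq)
    have hsub : F ∪ G ⊆ S := by
      rintro p (hp | hp)
      · exact ⟨p, hp, ⊤, hG.1, m_aba p ⊤⟩
      · exact ⟨⊤, hF.1, p, hp, by rw [m_comm]; exact m_aba p ⊤⟩
    exact filGen_subset hSF hsub hx
  · rintro ⟨f, hf, g, hg, hm⟩
    apply Set.mem_sInter.mpr
    rintro H ⟨hHF, hsub'⟩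
    have hfx : f ⊔ x ∈ H := hHF.2.1 f _ le_sup_left (hsub' (Or.inl hf))
    have hgx : g ⊔ x ∈ H := hHF.2.1 g _ le_sup_left (hsub' (Or.inr hg))
    refine hHF.2.2 (f ⊔ x) (g ⊔ x) x hfx hgx ?_
    have := m_isGLB f g x
    rwa [hm] at this


open DNearlattice in
lemma top_mem_ann (a : A) : (⊤ : A) ∈ ann a := by simp [ann]

open DNearlattice in
lemma self_mem_dann (a : A) : a ∈ dann a := by
  intro f hf
  rw [sup_comm]; exact hf

/-- `A` is normal and quasicomplemented iff `R(A)` is a Boolean algebra,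
i.e. every `a⊤` has a complement `b⊤` in `R(A)`. -/
theorem stmt18 :
    (NormalNL A ∧ Quasicomplemented A) ↔
      ∀ a : A, ∃ b : A,
        ann a ∩ ann b = {(⊤ : A)} ∧ filJoin (ann a) (ann b) = Set.univ := by
  constructor
  · rintro ⟨hN, hQ⟩ a
    obtain ⟨b, hb⟩ := hQ a
    have hab : a ⊔ b = ⊤ := by
      have : a ∈ ann b := hb ▸ self_mem_dann a
      exact this
    refine ⟨b, ?_, ?_⟩
    · ext x
      constructor
      · rintro ⟨hxa, hxb⟩
        have hxd : x ∈ dann a := hb ▸ hxb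
        have := hxd x hxa
        rw [sup_idem] at this
        exact this
      · rintro rfl
        exact ⟨top_mem_ann a, top_mem_ann b⟩
    · rw [← hN a b, hab]
      ext x
      simp [ann]
  · intro h
    -- Quasicomplementedness
    have hQ : Quasicomplemented A := by
      intro a
      obtain ⟨b, hint, hjoin⟩ := h a
      refine ⟨b, Set.Subset.antisymm ?_ ?_⟩
      · intro x hx
        have hx' : x ∈ filJoin (ann a) (ann b) := by rw [hjoin]; trivial
        obtain ⟨f, hf, g, hg, hm⟩ := (mem_filJoin (isFil_ann a) (isFil_ann b)).mp hx'
        have hfx : f ⊔ x = ⊤ := by rw [sup_comm]; exact hx f hf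
        have hglb := m_isGLB f g x
        rw [hm, hfx] at hglb
        have hgx : g ⊔ x ≤ x := hglb.2 (by rintro t (rfl | ht) <;> simp_all)
        have hgle : g ≤ x := le_sup_left.trans hgx
        show x ⊔ b = ⊤
        have : g ⊔ b ≤ x ⊔ b := sup_le_sup_right hgle b
        rw [hg] at this
        exact le_antisymm le_top (by simpa using this)
      · intro y hy
        intro f hf
        have hmem : y ⊔ f ∈ ann a ∩ ann b := by
          constructor
          · show (y ⊔ f) ⊔ a = ⊤
            rw [sup_assoc, hf]
            exact sup_top_eq y
          · exact (isFil_ann b).2.1 y _ le_sup_left hy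
        rw [hint] at hmem
        exact hmem
    refine ⟨?_, hQ⟩
    -- Normality
    intro a b
    apply Set.Subset.antisymm
    · intro x hx
      obtain ⟨c, hint, hjoin⟩ := h a
      have hx' : x ∈ filJoin (ann a) (ann c) := by rw [hjoin]; trivial
      obtain ⟨f, hf, g, hg, hm⟩ := (mem_filJoin (isFil_ann a) (isFil_ann c)).mp hx'
      have hgxb : g ⊔ x ∈ ann b := by
        have hmem : (g ⊔ x) ⊔ b ∈ ann a ∩ ann c := by
          constructor
          · show ((g ⊔ x) ⊔ b) ⊔ a = ⊤
            have : x ⊔ (a ⊔ b) = ⊤ := hx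
            calc ((g ⊔ x) ⊔ b) ⊔ a = g ⊔ (x ⊔ (a ⊔ b)) := by ac_rfl
              _ = ⊤ := by rw [this, sup_top_eq]
          · exact (isFil_ann c).2.1 g _ (le_sup_left.trans le_sup_left) hg
        rw [hint] at hmem
        exact hmem
      apply (mem_filJoin (isFil_ann a) (isFil_ann b)).mpr
      refine ⟨f, hf, g ⊔ x, hgxb, ?_⟩
      have h1 := m_isGLB f g x
      have h2 := m_isGLB f (g ⊔ x) x
      rw [hm] at h1
      rw [sup_assoc, sup_idem] at h2
      exact h2.unique h1
    · apply filGen_subset (isFil_ann (a ⊔ b))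
      rintro p (hp | hp)
      · show p ⊔ (a ⊔ b) = ⊤
        rw [← sup_assoc, hp]
        exact top_sup_eq b
      · show p ⊔ (a ⊔ b) = ⊤
        rw [sup_comm a b, ← sup_assoc, hp]
        exact top_sup_eq a
end
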